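/- The one-particle representation of the temporal Coleman-Mandula operator, (X_0 φ)(p) = -(i/m²) ω_p (3/2 + p^k ∂/∂p^k) φ(p), is symmetric (hermitian) on Schwartz functions with respect to the Lorentz-invariant inner product ⟨ψ, φ⟩ = ∫ (d³p / (2ω_p)) conj(ψ(p)) φ(p), where ω_p = √(|p|² + m²) and m > 0. -/

import Mathlib

/-!
The measure `d³p/(2ω_p)` cancels the factor `ω_p` of `X₀`, so that, with `c = -i/(2m²)` and
`g = ψ̄ φ`, `⟨ψ, X₀φ⟩ = c ∫ ((3/2) g + ψ̄ (p·∇φ))` and `⟨X₀ψ, φ⟩ = -c ∫ ((3/2) g + (p·∇ψ̄) φ)`.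
Their difference is `c ∫ (3 g + p·∇g)`, which vanishes: integrating the Euler operator `p·∇` by
parts against Lebesgue measure on `ℝⁿ` gives `∫ p·∇g = -n ∫ g`.
-/

noncomputable section
open Complex MeasureTheory BigOperators

/-- Relativistic energy `ω_p = √(|p|² + m²)`. -/
def ω (m : ℝ) (p : EuclideanSpace ℝ (Fin 3)) : ℝ := Real.sqrt (‖p‖ ^ 2 + m ^ 2)

/-- Partial derivative `∂φ/∂p^k` of a function on momentum space. -/
def pd (φ : EuclideanSpace ℝ (Fin 3) → ℂ) (k : Fin 3) (p : EuclideanSpace ℝ (Fin 3)) : ℂ :=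
  fderiv ℝ φ p (EuclideanSpace.single k 1)

/-- One-particle representation of the temporal Coleman–Mandula operator:
`(X₀ φ)(p) = -(i/m²) ω_p ((3/2) φ(p) + p^k ∂φ/∂p^k)`. -/
def X0act (m : ℝ) (φ : EuclideanSpace ℝ (Fin 3) → ℂ) (p : EuclideanSpace ℝ (Fin 3)) : ℂ :=
  (-(I / (m ^ 2 : ℂ))) * ((ω m p : ℝ) : ℂ) *
    (((3 : ℂ) / 2) * φ p + ∑ k, ((p k : ℝ) : ℂ) * pd φ k p)

/-- One-particle representation of the spatial Coleman–Mandula operator: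
`(X_j φ)(p) = i (3 p_j/(2m²) φ(p) + (p_j/m²) p^k ∂_k φ(p) - ∂_j φ(p))`. -/
def Xjact (m : ℝ) (j : Fin 3) (φ : EuclideanSpace ℝ (Fin 3) → ℂ)
    (p : EuclideanSpace ℝ (Fin 3)) : ℂ :=
  I * (((3 : ℂ) * ((p j : ℝ) : ℂ) / (2 * (m ^ 2 : ℂ))) * φ p
       + (((p j : ℝ) : ℂ) / (m ^ 2 : ℂ)) * ∑ k, ((p k : ℝ) : ℂ) * pd φ k p
       - pd φ j p)

/-- Lorentz-invariant inner product `⟨ψ, φ⟩ = ∫ d³p/(2ω_p) conj(ψ(p)) φ(p)`. -/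
def lorInner (m : ℝ) (ψ φ : EuclideanSpace ℝ (Fin 3) → ℂ) : ℂ :=
  ∫ p, (starRingEnd ℂ) (ψ p) * φ p / (((2 * ω m p : ℝ)) : ℂ)

open scoped SchwartzMap LineDeriv ComplexConjugate

def conjMulCLM : ℂ →L[ℝ] ℂ →L[ℝ] ℂ :=
  (ContinuousLinearMap.mul ℝ ℂ).comp (conjCLE : ℂ →L[ℝ] ℂ)

namespace SchwartzMap

variable {D E F G : Type*} [NormedAddCommGroup D] [NormedSpace ℝ D]
  [NormedAddCommGroup E] [NormedSpace ℝ E] [NormedAddCommGroup F] [NormedSpace ℝ F]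
  [NormedAddCommGroup G] [NormedSpace ℝ G]

def eulerCLM : 𝓢(D, F) →L[ℝ] 𝓢(D, F) :=
  bilinLeftCLM (ContinuousLinearMap.id ℝ (D →L[ℝ] F)) Function.HasTemperateGrowth.id ∘L
    fderivCLM ℝ D F

@[simp]
theorem eulerCLM_apply (f : 𝓢(D, F)) (x : D) : eulerCLM f x = fderiv ℝ f x x := rfl

theorem eulerCLM_pairing (B : E →L[ℝ] F →L[ℝ] G) (f : 𝓢(D, E)) (g : 𝓢(D, F)) :
    eulerCLM (pairing B f g) = pairing B (eulerCLM f) g + pairing B f (eulerCLM g) := by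
  ext x
  simp [pairing_apply, B.fderiv_of_bilinear f.differentiableAt g.differentiableAt, add_comm]

variable [MeasurableSpace D] [BorelSpace D] [FiniteDimensional ℝ D]
  {μ : Measure D} [μ.IsAddHaarMeasure]

theorem integral_smul_lineDerivOp_eq_neg (ℓ : D →L[ℝ] ℝ) (f : 𝓢(D, F)) (v : D) :
    ∫ x, ℓ x • ∂_{v} f x ∂μ = -(ℓ v • ∫ x, f x ∂μ) := by
  rw [← integral_smul]
  exact integral_bilinear_hasLineDerivAt_right_eq_neg_left_of_integrable
    (B := ContinuousLinearMap.lsmul ℝ ℝ) (f.integrable.smul (ℓ v))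
    (bilinLeftCLM (ContinuousLinearMap.lsmul ℝ ℝ).flip ℓ.hasTemperateGrowth (∂_{v} f)).integrable
    (bilinLeftCLM (ContinuousLinearMap.lsmul ℝ ℝ).flip ℓ.hasTemperateGrowth f).integrable
    (fun x _ ↦ ℓ.hasFDerivAt.hasLineDerivAt v) (fun x _ ↦ (f.hasFDerivAt x).hasLineDerivAt v)

theorem integral_eulerCLM (f : 𝓢(D, F)) :
    ∫ x, eulerCLM f x ∂μ = -(Module.finrank ℝ D • ∫ x, f x ∂μ) := by
  let b := Module.finBasis ℝ D
  let ℓ : Fin (Module.finrank ℝ D) → D →L[ℝ] ℝ :=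
    fun i ↦ LinearMap.toContinuousLinearMap (b.coord i)
  have hexpand : ∀ x, eulerCLM f x = ∑ i, ℓ i x • ∂_{b i} f x := fun x ↦ by
    have hx : fderiv ℝ f x x = fderiv ℝ f x (∑ i, b.repr x i • b i) := by rw [b.sum_repr]
    simp only [eulerCLM_apply, hx, map_sum, map_smul, lineDerivOp_apply_eq_fderiv]
    rfl
  have hint : ∀ i, Integrable (fun x ↦ ℓ i x • ∂_{b i} f x) μ := fun i ↦
    (bilinLeftCLM (ContinuousLinearMap.lsmul ℝ ℝ).flip (ℓ i).hasTemperateGrowth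
      (∂_{b i} f)).integrable
  simp_rw [hexpand, integral_finsetSum _ (fun i _ ↦ hint i), integral_smul_lineDerivOp_eq_neg]
  simp [ℓ, Finset.sum_neg_distrib]

theorem integral_conj_mul_fderiv_add (ψ φ : 𝓢(D, ℂ)) :
    ∫ x, conj (ψ x) * fderiv ℝ φ x x ∂μ + ∫ x, conj (fderiv ℝ ψ x x) * φ x ∂μ
      = -(Module.finrank ℝ D • ∫ x, conj (ψ x) * φ x ∂μ) := by
  have h := integral_eulerCLM (μ := μ) (pairing conjMulCLM ψ φ)
  simp only [eulerCLM_pairing, add_apply] at h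
  rw [integral_add (pairing _ _ _).integrable (pairing _ _ _).integrable, add_comm] at h
  simpa [conjMulCLM] using h

end SchwartzMap

open SchwartzMap

local notation "ℝ³" => EuclideanSpace ℝ (Fin 3)

theorem sum_mul_pd_eq_fderiv (φ : ℝ³ → ℂ) (p : ℝ³) :
    ∑ k, (p k : ℂ) * pd φ k p = fderiv ℝ φ p p := by
  have hp : fderiv ℝ φ p p = fderiv ℝ φ p (∑ k, p k • EuclideanSpace.single k 1) := by
    congr 1
    simpa using ((EuclideanSpace.basisFun (Fin 3) ℝ).sum_repr p).symm
  simp [hp, pd, Complex.real_smul]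

theorem ω_pos {m : ℝ} (hm : m ≠ 0) (p : ℝ³) : 0 < ω m p :=
  Real.sqrt_pos.2 (by positivity)

theorem lorInner_X0act_right {m : ℝ} (hm : m ≠ 0) (ψ φ : 𝓢(ℝ³, ℂ)) :
    lorInner m ψ (X0act m φ) = -(I / (2 * m ^ 2)) *
      (3 / 2 * (∫ p, conj (ψ p) * φ p) + ∫ p, conj (ψ p) * fderiv ℝ φ p p) := by
  have hpt : ∀ p, conj (ψ p) * X0act m φ p / ((2 * ω m p : ℝ) : ℂ)
      = -(I / (2 * m ^ 2)) * (3 / 2 * (conj (ψ p) * φ p) + conj (ψ p) * fderiv ℝ φ p p) := by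
    intro p
    have hω : (ω m p : ℂ) ≠ 0 := by exact_mod_cast (ω_pos hm p).ne'
    simp only [X0act, sum_mul_pd_eq_fderiv]
    push_cast
    field_simp
  simp only [lorInner, hpt]
  rw [integral_const_mul, integral_add, integral_const_mul]
  · exact (pairing conjMulCLM ψ φ).integrable.const_mul _
  · exact (pairing conjMulCLM ψ (eulerCLM φ)).integrable

theorem lorInner_X0act_left {m : ℝ} (hm : m ≠ 0) (ψ φ : 𝓢(ℝ³, ℂ)) :
    lorInner m (X0act m ψ) φ = I / (2 * m ^ 2) *
      (3 / 2 * (∫ p, conj (ψ p) * φ p) + ∫ p, conj (fderiv ℝ ψ p p) * φ p) := by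
  have hpt : ∀ p, conj (X0act m ψ p) * φ p / ((2 * ω m p : ℝ) : ℂ)
      = I / (2 * m ^ 2) * (3 / 2 * (conj (ψ p) * φ p) + conj (fderiv ℝ ψ p p) * φ p) := by
    intro p
    have hω : (ω m p : ℂ) ≠ 0 := by exact_mod_cast (ω_pos hm p).ne'
    simp only [X0act, sum_mul_pd_eq_fderiv, map_mul, map_neg, map_div₀, map_add, map_pow,
      conj_I, conj_ofReal, map_ofNat]
    push_cast
    field_simp
  simp only [lorInner, hpt]
  rw [integral_const_mul, integral_add, integral_const_mul]
  · exact (pairing conjMulCLM ψ φ).integrable.const_mul _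
  · exact (pairing conjMulCLM (eulerCLM ψ) φ).integrable

/-- the temporal Coleman–Mandula operator `X₀` is symmetric on Schwartz
functions w.r.t. the Lorentz-invariant inner product. -/
theorem stmt11 (m : ℝ) (hm : 0 < m)
    (ψ φ : SchwartzMap (EuclideanSpace ℝ (Fin 3)) ℂ) :
    lorInner m (⇑ψ) (X0act m ⇑φ) = lorInner m (X0act m ⇑ψ) (⇑φ) := by
  rw [lorInner_X0act_right hm.ne', lorInner_X0act_left hm.ne']
  have hibp := integral_conj_mul_fderiv_add (μ := volume) ψ φ
  rw [finrank_euclideanSpace_fin] at hibp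
  linear_combination -(I / (2 * (m : ℂ) ^ 2)) * hibp
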